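/- arXiv:1707.03451 — 8 statements merged into one kernel-verified Lean document; each statement's English description precedes it below -/
import Mathlib

section
/- For probability distributions p, q on {1,...,m}, if there exists a finite probability space B, a distribution q_B on B, and a joint distribution q_{AB} on {1,...,m}×B whose marginal on the first factor is q and whose marginal on B is q_B, such that the product distribution p⊗q_B majorizes q_{AB}, then the Shannon entropy satisfies H(p) ≤ H(q). -/
open scoped BigOperators Classical

def Majorizes {ι κ : Type*} [Fintype ι] [Fintype κ] (x : ι → ℝ) (y : κ → ℝ) : Prop :=
  (∑ i, x i = ∑ j, y j) ∧
  ∀ s : Finset κ, ∃ t : Finset ι, t.card ≤ s.card ∧ ∑ j ∈ s, y j ≤ ∑ i ∈ t, x i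

def IsProbDist {ι : Type*} [Fintype ι] (p : ι → ℝ) : Prop :=
  (∀ i, 0 ≤ p i) ∧ ∑ i, p i = 1

noncomputable def shannonH {ι : Type*} [Fintype ι] (p : ι → ℝ) : ℝ :=
  -∑ i, p i * Real.log (p i)

noncomputable def hartleyH {ι : Type*} [Fintype ι] (p : ι → ℝ) : ℝ :=
  Real.log ((Finset.univ.filter (fun i => p i ≠ 0)).card)

open Finset

/-- Greedy lemma: sum of an antitone nonneg function over any finset of naturals is
at most the sum over an initial segment of the same cardinality. -/
lemma greedy_aux (A : ℕ → ℝ) (hA : Antitone A) :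
    ∀ N : ℕ, ∀ t : Finset ℕ, (∑ i ∈ t, i) ≤ N →
      ∑ i ∈ t, A i ≤ ∑ i ∈ Finset.range t.card, A i := by
  intro N
  induction N using Nat.strong_induction_on with
  | _ N ih =>
    intro t ht
    by_cases hsub : t ⊆ Finset.range t.card
    · have heq : t = Finset.range t.card :=
        Finset.eq_of_subset_of_card_le hsub (by simp)
      exact le_of_eq (by rw [← heq])
    · obtain ⟨j, hjt, hjr⟩ := Finset.not_subset.mp hsub
      have hjcard : t.card ≤ j := by simpa using hjr
      have hex : ∃ i ∈ Finset.range t.card, i ∉ t := by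
        by_contra hc
        push_neg at hc
        have hsub2 : Finset.range t.card ⊆ t := fun i hi => hc i hi
        have hins : insert j (Finset.range t.card) ⊆ t :=
          Finset.insert_subset hjt hsub2
        have := Finset.card_le_card hins
        rw [Finset.card_insert_of_notMem hjr] at this
        simp at this
      obtain ⟨i, hir, hit⟩ := hex
      have hij : i < j := lt_of_lt_of_le (Finset.mem_range.mp hir) hjcard
      set t' : Finset ℕ := insert i (t.erase j) with ht'
      have hinotin : i ∉ t.erase j := fun h => hit (Finset.mem_of_mem_erase h)
      have hcard' : t'.card = t.card := by
        rw [ht', Finset.card_insert_of_notMem hinotin,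
          Finset.card_erase_of_mem hjt]
        have : 1 ≤ t.card := Finset.card_pos.mpr ⟨j, hjt⟩
        omega
      have hsumA : ∑ a ∈ t, A a ≤ ∑ a ∈ t', A a := by
        rw [ht', Finset.sum_insert hinotin,
          ← Finset.add_sum_erase _ A hjt]
        exact add_le_add_left (hA hij.le) _
      have hidx : (∑ a ∈ t', a) < ∑ a ∈ t, a := by
        rw [ht', Finset.sum_insert hinotin]
        have h1 : ∑ a ∈ t.erase j, a + j = ∑ a ∈ t, a := by
          rw [Finset.sum_erase_add _ _ hjt]
        omega
      have := ih (∑ a ∈ t', a) (lt_of_lt_of_le hidx ht) t' le_rfl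
      rw [hcard'] at this
      exact hsumA.trans this

lemma greedy (A : ℕ → ℝ) (hA : Antitone A) (t : Finset ℕ) :
    ∑ i ∈ t, A i ≤ ∑ i ∈ Finset.range t.card, A i :=
  greedy_aux A hA _ t le_rfl

lemma tangent_line {x y : ℝ} (hx : 0 ≤ x) (hy : 0 < y) :
    y * Real.log y + (Real.log y + 1) * (x - y) ≤ x * Real.log x := by
  rcases eq_or_lt_of_le hx with h0 | hx'
  · rw [← h0]
    have h : y * Real.log y + (Real.log y + 1) * (0 - y) = -y := by ring
    rw [h]
    simp
    linarith
  · have h3 : x * (Real.log y - Real.log x) ≤ y - x := by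
      have hlog := Real.log_le_sub_one_of_pos (div_pos hy hx')
      rw [Real.log_div hy.ne' hx'.ne'] at hlog
      have h4 := mul_le_mul_of_nonneg_left hlog hx'.le
      calc x * (Real.log y - Real.log x) ≤ x * (y / x - 1) := h4
        _ = y - x := by field_simp
    nlinarith [h3]

lemma karamata_core (N : ℕ) (A B : ℕ → ℝ) (hA0 : ∀ i, 0 ≤ A i)
    (hBpos : ∀ i, i < N → 0 < B i)
    (hBanti : ∀ i j, i ≤ j → j < N → B j ≤ B i)
    (hpre : ∀ k, k ≤ N → ∑ i ∈ range k, B i ≤ ∑ i ∈ range k, A i)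
    (htot : ∑ i ∈ range N, A i = ∑ i ∈ range N, B i) :
    ∑ i ∈ range N, B i * Real.log (B i) ≤ ∑ i ∈ range N, A i * Real.log (A i) := by
  set c : ℕ → ℝ := fun i => Real.log (B i) + 1 with hc
  set d : ℕ → ℝ := fun i => A i - B i with hd
  -- Abel summation
  have habel := Finset.sum_range_by_parts c d N
  have hDN : ∑ i ∈ range N, d i = 0 := by
    simp only [hd, Finset.sum_sub_distrib]
    rw [htot]; ring
  have hS : 0 ≤ ∑ i ∈ range N, c i * d i := by

    have h1 : ∑ i ∈ range N, c i • d i =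
        c (N - 1) • ∑ i ∈ range N, d i
          - ∑ i ∈ range (N - 1), (c (i + 1) - c i) • (∑ j ∈ range (i + 1), d j) := habel
    simp only [smul_eq_mul] at h1
    rw [h1, hDN, mul_zero, zero_sub, le_neg, neg_zero]
    apply Finset.sum_nonpos
    intro i hi
    have hiN : i + 1 < N := by
      have := Finset.mem_range.mp hi
      omega
    have hcd : c (i + 1) - c i ≤ 0 := by
      have hb : B (i + 1) ≤ B i := hBanti i (i + 1) (by omega) hiN
      have := Real.log_le_log (hBpos (i + 1) hiN) hb
      simp only [hc]
      linarith
    have hDpos : 0 ≤ ∑ j ∈ range (i + 1), d j := by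
      have := hpre (i + 1) (by omega)
      simp only [hd, Finset.sum_sub_distrib]
      linarith
    exact mul_nonpos_of_nonpos_of_nonneg hcd hDpos
  have htangent : ∀ i ∈ range N,
      B i * Real.log (B i) + c i * d i ≤ A i * Real.log (A i) := by
    intro i hi
    exact tangent_line (hA0 i) (hBpos i (Finset.mem_range.mp hi))
  have hsum := Finset.sum_le_sum htangent
  rw [Finset.sum_add_distrib] at hsum
  linarith

lemma exists_desc {α : Type*} [Fintype α] (z : α → ℝ) (hz : ∀ a, 0 ≤ z a) :
    ∃ Z : ℕ → ℝ, Antitone Z ∧ (∀ i, 0 ≤ Z i) ∧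
      (∀ i, Fintype.card α ≤ i → Z i = 0) ∧
      (∀ g : ℝ → ℝ, g 0 = 0 → ∀ K, Fintype.card α ≤ K →
        ∑ i ∈ Finset.range K, g (Z i) = ∑ a, g (z a)) ∧
      (∀ k, k ≤ Fintype.card α → ∃ s : Finset α, s.card = k ∧
        ∑ a ∈ s, z a = ∑ i ∈ Finset.range k, Z i) ∧
      (∀ t : Finset α, ∑ a ∈ t, z a ≤ ∑ i ∈ Finset.range t.card, Z i) := by
  classical
  set n := Fintype.card α with hn
  let e : Fin n ≃ α := (Fintype.equivFin α).symm
  let σ₀ : Equiv.Perm (Fin n) := Tuple.sort (z ∘ e)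
  have hmono : Monotone ((z ∘ e) ∘ σ₀) := Tuple.monotone_sort (z ∘ e)
  let σ : Fin n ≃ α := (Fin.revPerm.trans σ₀).trans e
  have hσ : ∀ i : Fin n, z (σ i) = (z ∘ e) (σ₀ i.rev) := fun i => rfl
  have hbanti : ∀ i j : Fin n, i ≤ j → z (σ j) ≤ z (σ i) := by
    intro i j hij
    rw [hσ, hσ]
    exact hmono (Fin.rev_le_rev.mpr hij)
  set Z : ℕ → ℝ := fun i => if h : i < n then z (σ ⟨i, h⟩) else 0 with hZ
  have hZval : ∀ (i : ℕ) (h : i < n), Z i = z (σ ⟨i, h⟩) := by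
    intro i h; simp [hZ, h]
  have hZzero : ∀ i, n ≤ i → Z i = 0 := by
    intro i h; simp [hZ, Nat.not_lt.mpr h]
  have hZ0 : ∀ i, 0 ≤ Z i := by
    intro i
    by_cases h : i < n
    · rw [hZval i h]; exact hz _
    · rw [hZzero i (Nat.not_lt.mp h)]
  have hZanti : Antitone Z := by
    intro i j hij
    by_cases hj : j < n
    · have hi : i < n := lt_of_le_of_lt hij hj
      rw [hZval i hi, hZval j hj]
      exact hbanti _ _ hij
    · rw [hZzero j (Nat.not_lt.mp hj)]
      exact hZ0 i
  have hfin : ∀ (f : ℕ → ℝ), ∑ i : Fin n, f i = ∑ i ∈ Finset.range n, f i :=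
    fun f => Fin.sum_univ_eq_sum_range f n
  have htrans : ∀ g : ℝ → ℝ, g 0 = 0 → ∀ K, n ≤ K →
      ∑ i ∈ Finset.range K, g (Z i) = ∑ a, g (z a) := by
    intro g hg0 K hK
    have h1 : ∑ i ∈ Finset.range K, g (Z i) = ∑ i ∈ Finset.range n, g (Z i) := by
      symm
      apply Finset.sum_subset (Finset.range_subset_range.mpr hK)
      intro i _ hi
      rw [hZzero i (Nat.not_lt.mp (fun h => hi (Finset.mem_range.mpr h))), hg0]
    rw [h1, ← hfin (fun i => g (Z i))]
    have h2 : ∀ i : Fin n, g (Z ↑i) = (g ∘ z) (σ i) := by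
      intro i; rw [hZval ↑i i.isLt]; rfl
    rw [Finset.sum_congr rfl (fun i _ => h2 i)]
    exact Equiv.sum_comp σ (g ∘ z)
  refine ⟨Z, hZanti, hZ0, hZzero, htrans, ?_, ?_⟩
  · intro k hk
    refine ⟨Finset.map ((Fin.castLEEmb hk).trans σ.toEmbedding) Finset.univ, by simp, ?_⟩
    rw [Finset.sum_map]
    have h2 : ∀ i : Fin k, z (σ (Fin.castLE hk i)) = Z ↑i := by
      intro i
      rw [hZval ↑i (lt_of_lt_of_le i.isLt hk)]
      rfl
    simp only [Function.Embedding.trans_apply, Fin.castLEEmb_apply, Equiv.coe_toEmbedding]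
    rw [Finset.sum_congr rfl (fun i _ => h2 i)]
    exact Fin.sum_univ_eq_sum_range Z k
  · intro t
    set t' : Finset ℕ := t.image (fun a => ((σ.symm a : Fin n) : ℕ)) with ht'
    have hinj : Function.Injective (fun a : α => ((σ.symm a : Fin n) : ℕ)) :=
      Fin.val_injective.comp σ.symm.injective
    have hcard : t'.card = t.card := Finset.card_image_of_injective t hinj
    have hsum : ∑ i ∈ t', Z i = ∑ a ∈ t, z a := by
      rw [ht', Finset.sum_image (fun a _ b _ h => hinj h)]
      apply Finset.sum_congr rfl
      intro a _
      rw [hZval _ (σ.symm a).isLt]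
      simp
    rw [← hsum, ← hcard]
    exact greedy Z hZanti t'

lemma schur_entropy {ι κ : Type*} [Fintype ι] [Fintype κ] (x : ι → ℝ) (y : κ → ℝ)
    (hx : ∀ i, 0 ≤ x i) (hy : ∀ j, 0 ≤ y j) (hmaj : Majorizes x y) :
    ∑ j, y j * Real.log (y j) ≤ ∑ i, x i * Real.log (x i) := by
  classical
  obtain ⟨A, hAanti, hA0, hAzero, hAtrans, _, hAgreedy⟩ := exists_desc x hx
  obtain ⟨Bf, hBanti, hB0, hBzero, hBtrans, hBprefix, _⟩ := exists_desc y hy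
  set n := Fintype.card κ with hn
  set nx := Fintype.card ι with hnx
  set N := ((Finset.range n).filter (fun i => 0 < Bf i)).card with hN
  have hNn : N ≤ n := le_trans (Finset.card_filter_le _ _) (by simp)
  have hid : (fun t : ℝ => t) 0 = 0 := rfl
  -- sums of values
  have hBsum : ∑ i ∈ Finset.range n, Bf i = ∑ j, y j := by
    simpa using hBtrans (fun t => t) rfl n le_rfl
  have hAsum : ∀ K, nx ≤ K → ∑ i ∈ Finset.range K, A i = ∑ i, x i := by
    intro K hK
    simpa using hAtrans (fun t => t) rfl K hK
  -- positivity below N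
  have posN : ∀ i, i < N → 0 < Bf i := by
    intro i hiN
    by_contra hc
    push_neg at hc
    have hsub : (Finset.range n).filter (fun j => 0 < Bf j) ⊆ Finset.range i := by
      intro j hj
      rw [Finset.mem_filter] at hj
      rw [Finset.mem_range]
      by_contra hji
      push_neg at hji
      have := lt_of_lt_of_le hj.2 (hBanti hji)
      linarith
    have := Finset.card_le_card hsub
    simp only [Finset.card_range] at this
    omega
  -- zero at and above N
  have zeroN : ∀ i, N ≤ i → Bf i = 0 := by
    intro i hiN
    by_cases hin : i < n
    · by_contra hc
      have hpos : 0 < Bf i := lt_of_le_of_ne (hB0 i) (Ne.symm hc)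
      have hsub : Finset.range (i + 1) ⊆ (Finset.range n).filter (fun j => 0 < Bf j) := by
        intro j hj
        rw [Finset.mem_range] at hj
        rw [Finset.mem_filter, Finset.mem_range]
        exact ⟨by omega, lt_of_lt_of_le hpos (hBanti (by omega : j ≤ i))⟩
      have := Finset.card_le_card hsub
      simp only [Finset.card_range] at this
      omega
    · exact hBzero i (by omega)
  -- prefix condition
  have hpre : ∀ k, k ≤ N → ∑ i ∈ Finset.range k, Bf i ≤ ∑ i ∈ Finset.range k, A i := by
    intro k hk
    obtain ⟨s, hscard, hssum⟩ := hBprefix k (hk.trans hNn)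
    obtain ⟨t, htcard, hts⟩ := hmaj.2 s
    calc ∑ i ∈ Finset.range k, Bf i = ∑ a ∈ s, y a := hssum.symm
      _ ≤ ∑ a ∈ t, x a := hts
      _ ≤ ∑ i ∈ Finset.range t.card, A i := hAgreedy t
      _ ≤ ∑ i ∈ Finset.range k, A i := by
          apply Finset.sum_le_sum_of_subset_of_nonneg
            (Finset.range_subset_range.mpr (htcard.trans_eq hscard))
          intro i _ _; exact hA0 i
  -- totals over range N agree
  have hBsumN : ∑ i ∈ Finset.range N, Bf i = ∑ j, y j := by
    rw [← hBsum]
    apply Finset.sum_subset (Finset.range_subset_range.mpr hNn)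
    intro i _ hi
    exact zeroN i (Nat.not_lt.mp (fun h => hi (Finset.mem_range.mpr h)))
  set K := max nx N with hK
  have hANle : ∑ i ∈ Finset.range N, A i ≤ ∑ i, x i := by
    rw [← hAsum K (le_max_left _ _)]
    apply Finset.sum_le_sum_of_subset_of_nonneg
      (Finset.range_subset_range.mpr (le_max_right _ _))
    intro i _ _; exact hA0 i
  have htotN : ∑ i ∈ Finset.range N, A i = ∑ i ∈ Finset.range N, Bf i := by
    have h3 : ∑ i ∈ Finset.range N, Bf i ≤ ∑ i ∈ Finset.range N, A i := hpre N le_rfl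
    have := hmaj.1
    linarith [hBsumN, hANle]
  -- A vanishes at and above N
  have hAzeroN : ∀ i, N ≤ i → A i = 0 := by
    intro i hiN
    by_cases hiK : i < K
    · have hdiff : ∑ i ∈ Finset.range K \ Finset.range N, A i = 0 := by
        rw [Finset.sum_sdiff_eq_sub (Finset.range_subset_range.mpr (le_max_right _ _))]
        rw [hAsum K (le_max_left _ _), htotN, hBsumN, hmaj.1]
        ring
      have := (Finset.sum_eq_zero_iff_of_nonneg (fun i _ => hA0 i)).mp hdiff i
      apply this
      simp only [Finset.mem_sdiff, Finset.mem_range]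
      exact ⟨hiK, by omega⟩
    · exact hAzero i (by omega)
  -- apply Karamata
  have hkar := karamata_core N A Bf hA0 posN (fun i j hij _ => hBanti hij) hpre htotN
  -- transfer back
  have hg0 : (fun t : ℝ => t * Real.log t) 0 = 0 := by simp
  have hyN : ∑ j, y j * Real.log (y j) = ∑ i ∈ Finset.range N, Bf i * Real.log (Bf i) := by
    have h1 := hBtrans (fun t => t * Real.log t) hg0 n le_rfl
    rw [← h1]
    symm
    apply Finset.sum_subset (Finset.range_subset_range.mpr hNn)
    intro i _ hi
    rw [zeroN i (Nat.not_lt.mp (fun h => hi (Finset.mem_range.mpr h)))]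
    simp
  have hxN : ∑ i, x i * Real.log (x i) = ∑ i ∈ Finset.range N, A i * Real.log (A i) := by
    have h1 := hAtrans (fun t => t * Real.log t) hg0 K (le_max_left _ _)
    rw [← h1]
    symm
    apply Finset.sum_subset (Finset.range_subset_range.mpr (le_max_right _ _))
    intro i _ hi
    rw [hAzeroN i (Nat.not_lt.mp (fun h => hi (Finset.mem_range.mpr h)))]
    simp
  rw [hyN, hxN]
  exact hkar

lemma mul_log_mul (a b : ℝ) (ha : 0 ≤ a) (hb : 0 ≤ b) :
    (a * b) * Real.log (a * b) = b * (a * Real.log a) + a * (b * Real.log b) := by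
  rcases eq_or_lt_of_le ha with h | ha'
  · rw [← h]; ring_nf
  rcases eq_or_lt_of_le hb with h | hb'
  · rw [← h]; ring_nf
  rw [Real.log_mul ha'.ne' hb'.ne']
  ring

theorem stmt0 (m : ℕ) (p q : Fin m → ℝ) (hp : IsProbDist p) (hq : IsProbDist q)
    (B : Type*) [Fintype B] (qB : B → ℝ) (hqB : IsProbDist qB)
    (qAB : Fin m × B → ℝ) (hqAB : IsProbDist qAB)
    (hmargA : ∀ i, ∑ b, qAB (i, b) = q i)
    (hmargB : ∀ b, ∑ i, qAB (i, b) = qB b)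
    (hmaj : Majorizes (fun x : Fin m × B => p x.1 * qB x.2) qAB) :
    shannonH p ≤ shannonH q := by
  classical
  -- Step 1: additivity of the product distribution
  set qB_sum := ∑ b, qB b with hqBsum
  set S := ∑ b, qB b * Real.log (qB b) with hS
  have hadd : ∑ z : Fin m × B, (p z.1 * qB z.2) * Real.log (p z.1 * qB z.2)
      = ∑ i, p i * Real.log (p i) + S := by
    rw [Fintype.sum_prod_type]
    have h1 : ∀ i : Fin m, ∑ b, (p i * qB b) * Real.log (p i * qB b)
        = qB_sum * (p i * Real.log (p i)) + p i * S := by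
      intro i
      rw [Finset.sum_congr rfl (fun b _ => mul_log_mul (p i) (qB b) (hp.1 i) (hqB.1 b))]
      rw [Finset.sum_add_distrib, ← Finset.sum_mul, ← Finset.mul_sum]
    rw [Finset.sum_congr rfl (fun i _ => h1 i), Finset.sum_add_distrib]
    rw [← Finset.sum_mul, ← Finset.mul_sum]
    simp only [qB_sum, S, hqB.2, hp.2, one_mul]
  -- Step 2: Schur concavity via majorization
  have hschur := schur_entropy (fun z : Fin m × B => p z.1 * qB z.2) qAB
    (fun z => mul_nonneg (hp.1 z.1) (hqB.1 z.2)) hqAB.1 hmaj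
  -- Step 3: subadditivity
  have hper : ∀ z : Fin m × B,
      qAB z * (Real.log (q z.1) + Real.log (qB z.2)) + (qAB z - q z.1 * qB z.2)
        ≤ qAB z * Real.log (qAB z) := by
    intro z
    rcases eq_or_lt_of_le (hqAB.1 z) with h0 | hr
    · rw [← h0]
      have hs : 0 ≤ q z.1 * qB z.2 := mul_nonneg (hq.1 z.1) (hqB.1 z.2)
      simp
      linarith
    · have hq1 : 0 < q z.1 := by
        rw [← hmargA z.1]
        calc (0:ℝ) < qAB z := hr
          _ = qAB (z.1, z.2) := by rfl
          _ ≤ ∑ b, qAB (z.1, b) :=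
            Finset.single_le_sum (fun b _ => hqAB.1 (z.1, b)) (Finset.mem_univ z.2)
      have hq2 : 0 < qB z.2 := by
        rw [← hmargB z.2]
        calc (0:ℝ) < qAB z := hr
          _ = qAB (z.1, z.2) := by rfl
          _ ≤ ∑ i, qAB (i, z.2) :=
            Finset.single_le_sum (fun i _ => hqAB.1 (i, z.2)) (Finset.mem_univ z.1)
      have hs : 0 < q z.1 * qB z.2 := mul_pos hq1 hq2
      have hlog := Real.log_le_sub_one_of_pos (div_pos hs hr)
      rw [Real.log_div hs.ne' hr.ne'] at hlog
      have h4 := mul_le_mul_of_nonneg_left hlog hr.le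
      have h5 : qAB z * (Real.log (q z.1 * qB z.2) - Real.log (qAB z))
          ≤ q z.1 * qB z.2 - qAB z := by
        calc qAB z * (Real.log (q z.1 * qB z.2) - Real.log (qAB z))
            ≤ qAB z * (q z.1 * qB z.2 / qAB z - 1) := h4
          _ = q z.1 * qB z.2 - qAB z := by field_simp
      rw [Real.log_mul hq1.ne' hq2.ne'] at h5
      nlinarith [h5]
  have hsub : ∑ i, q i * Real.log (q i) + ∑ b, qB b * Real.log (qB b)
      ≤ ∑ z : Fin m × B, qAB z * Real.log (qAB z) := by
    have hsum := Finset.sum_le_sum (s := Finset.univ) (fun z _ => hper z)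
    have e1 : ∑ z : Fin m × B, qAB z * Real.log (q z.1) = ∑ i, q i * Real.log (q i) := by
      rw [Fintype.sum_prod_type]
      have h : ∀ i : Fin m, ∑ b, qAB (i, b) * Real.log (q i) = q i * Real.log (q i) :=
        fun i => by rw [← Finset.sum_mul, hmargA i]
      exact Finset.sum_congr rfl (fun i _ => h i)
    have e2 : ∑ z : Fin m × B, qAB z * Real.log (qB z.2) = ∑ b, qB b * Real.log (qB b) := by
      rw [Fintype.sum_prod_type_right]
      have h : ∀ b : B, ∑ i, qAB (i, b) * Real.log (qB b) = qB b * Real.log (qB b) :=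
        fun b => by rw [← Finset.sum_mul, hmargB b]
      exact Finset.sum_congr rfl (fun b _ => h b)
    have e3 : ∑ z : Fin m × B, qAB z = 1 := hqAB.2
    have e4 : ∑ z : Fin m × B, q z.1 * qB z.2 = 1 := by
      rw [Fintype.sum_prod_type]
      simp_rw [← Finset.mul_sum, ← Finset.sum_mul, hq.2, hqB.2]
      norm_num
    simp only [mul_add, Finset.sum_add_distrib, Finset.sum_sub_distrib, e3, e4] at hsum
    calc ∑ i, q i * Real.log (q i) + ∑ b, qB b * Real.log (qB b)
        = ∑ z : Fin m × B, qAB z * Real.log (q z.1)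
          + ∑ z : Fin m × B, qAB z * Real.log (qB z.2) + (1 - 1) := by
          rw [e1, e2]; ring
      _ ≤ ∑ z : Fin m × B, qAB z * Real.log (qAB z) := by linarith
  simp only [shannonH, neg_le_neg_iff]
  rw [hadd] at hschur
  linarith
end

section
/- For probability distributions p, q on {1,...,m}, if there exists a finite probability space B, a distribution q_B, and a joint distribution q_{AB} with first marginal q and second marginal q_B such that p⊗q_B majorizes q_{AB}, then H₀(p) ≤ H₀(q), where H₀ denotes the logarithm of the number of nonzero entries (max entropy / Hartley entropy). -/
open scoped BigOperators Classical

theorem stmt1 (m : ℕ) (p q : Fin m → ℝ) (hp : IsProbDist p) (hq : IsProbDist q)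
    (B : Type*) [Fintype B] (qB : B → ℝ) (hqB : IsProbDist qB)
    (qAB : Fin m × B → ℝ) (hqAB : IsProbDist qAB)
    (hmargA : ∀ i, ∑ b, qAB (i, b) = q i)
    (hmargB : ∀ b, ∑ i, qAB (i, b) = qB b)
    (hmaj : Majorizes (fun x : Fin m × B => p x.1 * qB x.2) qAB) :
    hartleyH p ≤ hartleyH q := by
  classical
  set Sp := Finset.univ.filter (fun i => p i ≠ 0) with hSp
  set Sq := Finset.univ.filter (fun i => q i ≠ 0) with hSq
  set SB := Finset.univ.filter (fun b => qB b ≠ 0) with hSB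
  set SAB := Finset.univ.filter (fun x : Fin m × B => qAB x ≠ 0) with hSAB
  have hsum : ∑ x ∈ SAB, qAB x = 1 := by
    rw [hSAB, Finset.sum_filter_ne_zero, hqAB.2]
  have htot : ∑ x : Fin m × B, p x.1 * qB x.2 = 1 := by
    rw [Fintype.sum_prod_type]
    simp_rw [← Finset.mul_sum, hqB.2, mul_one, hp.2]
  obtain ⟨t, hcard, hge⟩ := hmaj.2 SAB
  rw [hsum] at hge
  have hnn : ∀ x : Fin m × B, 0 ≤ p x.1 * qB x.2 := fun x =>
    mul_nonneg (hp.1 _) (hqB.1 _)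
  have hsub : (Finset.univ.filter fun x : Fin m × B => p x.1 * qB x.2 ≠ 0) ⊆ t := by
    intro x hx
    by_contra hxt
    have hxne : p x.1 * qB x.2 ≠ 0 := (Finset.mem_filter.mp hx).2
    have hpos : 0 < p x.1 * qB x.2 := lt_of_le_of_ne (hnn x) (Ne.symm hxne)
    have hle : ∑ y ∈ insert x t, p y.1 * qB y.2 ≤ 1 := by
      rw [← htot]
      exact Finset.sum_le_sum_of_subset_of_nonneg (Finset.subset_univ _)
        (fun y _ _ => hnn y)
    rw [Finset.sum_insert hxt] at hle
    linarith
  have hprodcard : Sp.card * SB.card =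
      (Finset.univ.filter fun x : Fin m × B => p x.1 * qB x.2 ≠ 0).card := by
    rw [← Finset.card_product]
    congr 1
    ext x
    simp [hSp, hSB, Finset.mem_product, mul_ne_zero_iff]
  have hABsub : SAB ⊆ Sq ×ˢ SB := by
    intro x hx
    have hx' : qAB x ≠ 0 := (Finset.mem_filter.mp hx).2
    have hqx : 0 < qAB x := lt_of_le_of_ne (hqAB.1 x) (Ne.symm hx')
    have h1 : qAB x ≤ q x.1 := by
      rw [← hmargA x.1]
      have := Finset.single_le_sum (f := fun b => qAB (x.1, b))
        (fun b _ => hqAB.1 _) (Finset.mem_univ x.2)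
      simpa using this
    have h2 : qAB x ≤ qB x.2 := by
      rw [← hmargB x.2]
      have := Finset.single_le_sum (f := fun i => qAB (i, x.2))
        (fun i _ => hqAB.1 _) (Finset.mem_univ x.1)
      simpa using this
    simp only [Finset.mem_product, hSq, hSB, Finset.mem_filter, Finset.mem_univ,
      true_and]
    exact ⟨ne_of_gt (lt_of_lt_of_le hqx h1), ne_of_gt (lt_of_lt_of_le hqx h2)⟩
  have hchain : Sp.card * SB.card ≤ Sq.card * SB.card := by
    calc Sp.card * SB.card
        = (Finset.univ.filter fun x : Fin m × B => p x.1 * qB x.2 ≠ 0).card :=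
          hprodcard
      _ ≤ t.card := Finset.card_le_card hsub
      _ ≤ SAB.card := hcard
      _ ≤ (Sq ×ˢ SB).card := Finset.card_le_card hABsub
      _ = Sq.card * SB.card := Finset.card_product _ _
  have hSBpos : 0 < SB.card := by
    rcases Finset.eq_empty_or_nonempty SB with h | h
    · exfalso
      have h0 : ∀ b, qB b = 0 := by
        intro b
        by_contra hb
        have : b ∈ SB := Finset.mem_filter.mpr ⟨Finset.mem_univ b, hb⟩
        simp [h] at this
      have h1 := hqB.2
      rw [Finset.sum_congr rfl (fun b _ => h0 b)] at h1
      simp at h1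
    · exact Finset.card_pos.mpr h
  have hcardle : Sp.card ≤ Sq.card :=
    Nat.le_of_mul_le_mul_right hchain hSBpos
  have hSppos : 0 < Sp.card := by
    rcases Finset.eq_empty_or_nonempty Sp with h | h
    · exfalso
      have h0 : ∀ i, p i = 0 := by
        intro i
        by_contra hi
        have : i ∈ Sp := Finset.mem_filter.mpr ⟨Finset.mem_univ i, hi⟩
        simp [h] at this
      have := hp.2
      rw [Finset.sum_congr rfl (fun i _ => h0 i)] at this
      simp at this
    · exact Finset.card_pos.mpr h
  unfold hartleyH
  apply Real.log_le_log
  · exact_mod_cast hSppos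
  · exact_mod_cast hcardle
end

section
/- Let p, q be probability distributions on {1,...,m} with sorted versions p↓ ≠ q↓, and suppose there exists a joint distribution q_{AB} with marginals q and q_B such that p⊗q_B majorizes q_{AB}. If moreover H(p) = H(q), then q_{AB} must equal the product q⊗q_B. (Hence H(p) = H(q) combined with p↓ ≠ q↓ leads to the standard catalytic majorization p⊗q_B ≻ q⊗q_B.) -/
open scoped BigOperators Classical


section Helpers
open Finset

-- sum over any finset of naturals of an antitone sequence is at most sum of first card terms
lemma sum_le_sorted (w : ℕ → ℝ) (hw : Antitone w) (s : Finset ℕ) :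
    ∑ i ∈ s, w i ≤ ∑ i ∈ Finset.range s.card, w i := by
  induction s using Finset.strongInduction with
  | _ s ih =>
    rcases s.eq_empty_or_nonempty with rfl | hne
    · simp
    · set M := s.max' hne with hM
      have hMs : M ∈ s := s.max'_mem hne
      have h1 : s ⊆ Finset.range (M + 1) := fun a ha =>
        Finset.mem_range.2 (Nat.lt_succ_of_le (s.le_max' a ha))
      have hcard : s.card ≤ M + 1 := by
        simpa using Finset.card_le_card h1
      obtain ⟨c, hc⟩ : ∃ c, s.card = c + 1 :=
        ⟨s.card - 1, (Nat.succ_pred_eq_of_pos (Finset.card_pos.2 hne)).symm⟩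
      have hce : (s.erase M).card = c := by
        rw [Finset.card_erase_of_mem hMs, hc]; rfl
      have hcM : c ≤ M := by omega
      have ihe := ih (s.erase M) (Finset.erase_ssubset hMs)
      rw [hce] at ihe
      calc ∑ i ∈ s, w i = ∑ i ∈ s.erase M, w i + w M := by
            rw [Finset.sum_erase_add _ _ hMs]
        _ ≤ ∑ i ∈ Finset.range c, w i + w c := add_le_add ihe (hw hcM)
        _ = ∑ i ∈ Finset.range s.card, w i := by rw [hc, Finset.sum_range_succ]

-- Abel summation positivity
lemma abel_nonneg (d w : ℕ → ℝ) (r : ℕ)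
    (hD : ∀ k ≤ r, 0 ≤ ∑ i ∈ Finset.range k, d i)
    (hw : ∀ i j, i ≤ j → j < r → w j ≤ w i)
    (hDr : ∑ i ∈ Finset.range r, d i = 0) :
    0 ≤ ∑ i ∈ Finset.range r, d i * w i := by
  have claim : ∀ k, k < r → (∑ i ∈ Finset.range k, d i) * w k ≤ ∑ i ∈ Finset.range k, d i * w i := by
    intro k
    induction k with
    | zero => intro _; simp
    | succ k ihk =>
      intro hk1
      have hk : k < r := Nat.lt_of_succ_lt hk1
      have h1 := ihk hk
      have hDk1 : 0 ≤ ∑ i ∈ Finset.range (k+1), d i := hD _ (le_of_lt hk1)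
      have hwk : w (k+1) ≤ w k := hw k (k+1) (Nat.le_succ k) hk1
      calc (∑ i ∈ Finset.range (k+1), d i) * w (k+1)
          ≤ (∑ i ∈ Finset.range (k+1), d i) * w k := by
            exact mul_le_mul_of_nonneg_left hwk hDk1
        _ = (∑ i ∈ Finset.range k, d i) * w k + d k * w k := by
            rw [Finset.sum_range_succ, add_mul]
        _ ≤ ∑ i ∈ Finset.range k, d i * w i + d k * w k := by linarith
        _ = ∑ i ∈ Finset.range (k+1), d i * w i := (Finset.sum_range_succ _ _).symm
  rcases Nat.eq_zero_or_pos r with rfl | hr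
  · simp
  · obtain ⟨s, rfl⟩ : ∃ s, r = s + 1 := ⟨r - 1, by omega⟩
    have h1 := claim s (Nat.lt_succ_self s)
    rw [Finset.sum_range_succ]
    rw [Finset.sum_range_succ] at hDr
    have h2 : (∑ i ∈ Finset.range s, d i + d s) * w s = 0 := by rw [hDr, zero_mul]
    rw [add_mul] at h2
    linarith

-- pointwise convexity inequality
lemma flog_ineq {u v : ℝ} (hu : 0 ≤ u) (hv : 0 < v) :
    (u - v) * (1 + Real.log v) ≤ u * Real.log u - v * Real.log v := by
  rcases eq_or_lt_of_le hu with rfl | hu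
  · simp; nlinarith [hv]
  · have h1 : Real.log (v / u) ≤ v / u - 1 := Real.log_le_sub_one_of_pos (by positivity)
    have h2 : Real.log (v / u) = Real.log v - Real.log u := Real.log_div hv.ne' hu.ne'
    have h3 : u * Real.log (v / u) ≤ u * (v / u - 1) := mul_le_mul_of_nonneg_left h1 hu.le
    have h4 : u * (v / u - 1) = v - u := by field_simp
    nlinarith [h3]

-- Gibbs inequality with equality case
lemma gibbs_eq {ι : Type*} [Fintype ι] (r s : ι → ℝ) (hr : ∀ i, 0 ≤ r i) (hs : ∀ i, 0 ≤ s i)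
    (hrs : ∀ i, r i ≠ 0 → 0 < s i) (hsum : ∑ i, r i = ∑ i, s i)
    (hle : ∑ i, r i * Real.log (r i) ≤ ∑ i, r i * Real.log (s i)) : r = s := by
  have key : ∀ i, r i - s i ≤ r i * Real.log (r i) - r i * Real.log (s i) := by
    intro i
    rcases eq_or_lt_of_le (hr i) with h0 | h0
    · simp [← h0]; exact hs i
    · have hsi := hrs i h0.ne'
      have h1 : Real.log (s i / r i) ≤ s i / r i - 1 := Real.log_le_sub_one_of_pos (by positivity)
      have h2 : Real.log (s i / r i) = Real.log (s i) - Real.log (r i) :=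
        Real.log_div hsi.ne' h0.ne'
      have h3 : r i * Real.log (s i / r i) ≤ r i * (s i / r i - 1) :=
        mul_le_mul_of_nonneg_left h1 h0.le
      have h4 : r i * (s i / r i - 1) = s i - r i := by field_simp
      nlinarith [h3]
  have hzero : ∑ i, ((r i * Real.log (r i) - r i * Real.log (s i)) - (r i - s i)) = 0 := by
    have h1 : ∑ i, (r i - s i) = 0 := by
      rw [Finset.sum_sub_distrib, hsum, sub_self]
    have h2 : ∑ i, (r i * Real.log (r i) - r i * Real.log (s i)) ≤ 0 := by
      rw [Finset.sum_sub_distrib]; linarith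
    have h3 : 0 ≤ ∑ i, ((r i * Real.log (r i) - r i * Real.log (s i)) - (r i - s i)) :=
      Finset.sum_nonneg fun i _ => by linarith [key i]
    have h4 : ∑ i, ((r i * Real.log (r i) - r i * Real.log (s i)) - (r i - s i)) ≤ 0 := by
      rw [Finset.sum_sub_distrib]; linarith
    linarith
  have heq : ∀ i, (r i * Real.log (r i) - r i * Real.log (s i)) - (r i - s i) = 0 := by
    intro i
    have := (Finset.sum_eq_zero_iff_of_nonneg
      (fun i _ => by linarith [key i] : ∀ i ∈ Finset.univ,
        0 ≤ (r i * Real.log (r i) - r i * Real.log (s i)) - (r i - s i))).1 hzero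
    exact this i (Finset.mem_univ i)
  funext i
  rcases eq_or_lt_of_le (hr i) with h0 | h0
  · have := heq i
    simp [← h0] at this
    rw [← h0, this]
  · have hsi := hrs i h0.ne'
    by_contra hne
    have hx : s i / r i ≠ 1 := by
      intro h
      exact hne (by field_simp at h; linarith)
    have h1 : Real.log (s i / r i) < s i / r i - 1 :=
      Real.log_lt_sub_one_of_pos (by positivity) hx
    have h2 : Real.log (s i / r i) = Real.log (s i) - Real.log (r i) :=
      Real.log_div hsi.ne' h0.ne'
    have h3 : r i * Real.log (s i / r i) < r i * (s i / r i - 1) :=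
      (mul_lt_mul_iff_right₀ h0).2 h1
    have h4 : r i * (s i / r i - 1) = s i - r i := by field_simp
    have := heq i
    nlinarith [h3]


lemma exists_sorted {α : Type*} [Fintype α] (z : α → ℝ) (hz : ∀ a, 0 ≤ z a) :
    ∃ (w : ℕ → ℝ) (g : Fin (Fintype.card α) ≃ α), Antitone w ∧ (∀ k, 0 ≤ w k) ∧
      (∀ k, Fintype.card α ≤ k → w k = 0) ∧ (∀ i : Fin (Fintype.card α), w i = z (g i)) := by
  classical
  set n := Fintype.card α with hn
  let e : α ≃ Fin n := Fintype.equivFin α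
  let z0 : Fin n → ℝ := fun i => z (e.symm i)
  let σ : Equiv.Perm (Fin n) := Tuple.sort (fun i => -(z0 i))
  have hmono : Monotone ((fun i => -(z0 i)) ∘ σ) := Tuple.monotone_sort _
  refine ⟨fun k => if h : k < n then z0 (σ ⟨k, h⟩) else 0,
    σ.trans e.symm, ?_, ?_, ?_, ?_⟩
  · intro k l hkl
    by_cases hl : l < n
    · have hk : k < n := lt_of_le_of_lt hkl hl
      simp only [dif_pos hk, dif_pos hl]
      have := hmono (show (⟨k, hk⟩ : Fin n) ≤ ⟨l, hl⟩ from hkl)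
      simpa using this
    · simp only [dif_neg hl]
      by_cases hk : k < n
      · simp only [dif_pos hk]; exact hz _
      · simp [dif_neg hk]
  · intro k
    by_cases hk : k < n
    · simp only [dif_pos hk]; exact hz _
    · simp [dif_neg hk]
  · intro k hk
    simp [dif_neg (not_lt.2 hk)]
  · intro i
    simp only [dif_pos i.isLt, Fin.eta]
    rfl




lemma sum_range_eq_of_zero (G : ℕ → ℝ) (a b : ℕ) (ha : ∀ i, a ≤ i → G i = 0)
    (hb : ∀ i, b ≤ i → G i = 0) :
    ∑ i ∈ Finset.range a, G i = ∑ i ∈ Finset.range b, G i := by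
  have key : ∀ c d : ℕ, c ≤ d → (∀ i, c ≤ i → G i = 0) →
      ∑ i ∈ Finset.range c, G i = ∑ i ∈ Finset.range d, G i := by
    intro c d hcd hc
    refine Finset.sum_subset (Finset.range_subset_range.2 hcd) ?_
    intro i _ hni
    exact hc i (by simpa using hni)
  rcases le_total a b with hab | hab
  · exact key a b hab ha
  · exact (key b a hab hb).symm

lemma maj_flog {ι κ : Type*} [Fintype ι] [Fintype κ] (x : ι → ℝ) (y : κ → ℝ)
    (hx : ∀ i, 0 ≤ x i) (hy : ∀ j, 0 ≤ y j) (h : Majorizes x y) :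
    ∑ j, y j * Real.log (y j) ≤ ∑ i, x i * Real.log (x i) := by
  classical
  obtain ⟨u, gu, huA, huN, huZ, huE⟩ := exists_sorted x hx
  obtain ⟨v, gv, hvA, hvN, hvZ, hvE⟩ := exists_sorted y hy
  -- total sums
  have hux : ∑ i ∈ Finset.range (Fintype.card ι), u i = ∑ i, x i := by
    rw [← Fin.sum_univ_eq_sum_range (fun k => u k) (Fintype.card ι)]
    calc ∑ i : Fin (Fintype.card ι), u i = ∑ i : Fin (Fintype.card ι), x (gu i) := by
          exact Finset.sum_congr rfl fun i _ => huE i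
      _ = ∑ i, x i := Equiv.sum_comp gu x
  have hvy : ∑ i ∈ Finset.range (Fintype.card κ), v i = ∑ j, y j := by
    rw [← Fin.sum_univ_eq_sum_range (fun k => v k) (Fintype.card κ)]
    calc ∑ i : Fin (Fintype.card κ), v i = ∑ i : Fin (Fintype.card κ), y (gv i) := by
          exact Finset.sum_congr rfl fun i _ => hvE i
      _ = ∑ j, y j := Equiv.sum_comp gv y
  -- any subset sum of x bounded by top sums of u
  have hU : ∀ t : Finset ι, ∑ a ∈ t, x a ≤ ∑ i ∈ Finset.range t.card, u i := by
    intro t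
    have hinj : Set.InjOn (fun a => (gu.symm a : ℕ)) t := fun a _ b _ hab => by
      have : gu.symm a = gu.symm b := Fin.val_injective hab
      exact gu.symm.injective this
    have hsum : ∑ a ∈ t, x a = ∑ k ∈ t.image (fun a => (gu.symm a : ℕ)), u k := by
      rw [Finset.sum_image (fun a ha b hb => hinj ha hb)]
      refine Finset.sum_congr rfl fun a _ => ?_
      have := huE (gu.symm a)
      simp at this
      simp [this]
    rw [hsum]
    have hcard : (t.image (fun a => (gu.symm a : ℕ))).card = t.card :=
      Finset.card_image_of_injOn hinj
    calc ∑ k ∈ t.image (fun a => (gu.symm a : ℕ)), u k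
        ≤ ∑ i ∈ Finset.range (t.image (fun a => (gu.symm a : ℕ))).card, u i :=
          sum_le_sorted u huA _
      _ = ∑ i ∈ Finset.range t.card, u i := by rw [hcard]
  -- top sums of v realized by subsets of κ
  have hV : ∀ k, (hk : k ≤ (Fintype.card κ)) → ∃ s : Finset κ, s.card = k ∧
      ∑ a ∈ s, y a = ∑ i ∈ Finset.range k, v i := by
    intro k hk
    refine ⟨Finset.image (fun j : Fin k => gv (Fin.castLE hk j)) Finset.univ, ?_, ?_⟩
    · rw [Finset.card_image_of_injective _
        (fun a b hab => Fin.castLE_injective hk (gv.injective hab) : Function.Injective _)]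
      simp
    · rw [Finset.sum_image (fun a _ b _ hab =>
        Fin.castLE_injective hk (gv.injective hab))]
      rw [← Fin.sum_univ_eq_sum_range (fun i => v i) k]
      refine Finset.sum_congr rfl fun j _ => ?_
      have := hvE (Fin.castLE hk j)
      simp only [Fin.coe_castLE] at this
      exact this.symm
  -- sorted majorization
  have hsorted : ∀ k, k ≤ (Fintype.card κ) → ∑ i ∈ Finset.range k, v i ≤ ∑ i ∈ Finset.range k, u i := by
    intro k hk
    obtain ⟨s, hsc, hss⟩ := hV k hk
    obtain ⟨t, htc, hts⟩ := h.2 s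
    calc ∑ i ∈ Finset.range k, v i = ∑ a ∈ s, y a := hss.symm
      _ ≤ ∑ a ∈ t, x a := hts
      _ ≤ ∑ i ∈ Finset.range t.card, u i := hU t
      _ ≤ ∑ i ∈ Finset.range k, u i := by
          refine Finset.sum_le_sum_of_subset_of_nonneg
            (Finset.range_subset_range.2 (htc.trans_eq hsc)) fun i _ _ => huN i
  -- r = number of nonzero entries of v
  have hex : ∃ k, v k = 0 := ⟨Fintype.card κ, hvZ _ le_rfl⟩
  set r := Nat.find hex with hr
  have hvr0 : v r = 0 := Nat.find_spec hex
  have hrκ : r ≤ Fintype.card κ := Nat.find_min' hex (hvZ _ le_rfl)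
  have hvpos : ∀ i, i < r → 0 < v i := fun i hi =>
    lt_of_le_of_ne (hvN i) (Ne.symm (Nat.find_min hex hi))
  have hvzero : ∀ i, r ≤ i → v i = 0 := fun i hi =>
    le_antisymm (hvr0 ▸ hvA hi) (hvN i)
  -- total
  have htot : ∑ i ∈ Finset.range r, v i = ∑ j, y j := by
    rw [← hvy]
    exact (sum_range_eq_of_zero (fun i => v i) r (Fintype.card κ)
      hvzero hvZ)
  -- u also totals within range r, and vanishes beyond
  have hurge : ∑ j, y j ≤ ∑ i ∈ Finset.range r, u i := htot ▸ hsorted r hrκ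
  set N := max (Fintype.card ι) r with hN
  have huNtot : ∑ i ∈ Finset.range N, u i = ∑ j, y j := by
    rw [← h.1, ← hux]
    exact (sum_range_eq_of_zero (fun i => u i) N (Fintype.card ι)
      (fun i hi => huZ i (le_trans (le_max_left _ _) hi)) huZ)
  have hsplit : ∑ i ∈ Finset.range N, u i
      = ∑ i ∈ Finset.range r, u i + ∑ i ∈ Finset.Ico r N, u i := by
    rw [Finset.range_eq_Ico, Finset.range_eq_Ico]
    exact (Finset.sum_Ico_consecutive _ (Nat.zero_le r)
      (le_max_right (Fintype.card ι) r)).symm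
  have hIco0 : ∑ i ∈ Finset.Ico r N, u i = 0 := by
    have h1 : 0 ≤ ∑ i ∈ Finset.Ico r N, u i := Finset.sum_nonneg fun i _ => huN i
    linarith [hsplit ▸ huNtot, hurge]
  have hur : ∑ i ∈ Finset.range r, u i = ∑ j, y j := by
    linarith [hsplit ▸ huNtot]
  have huzero : ∀ i, r ≤ i → u i = 0 := by
    intro i hi
    by_cases hiN : i < N
    · exact (Finset.sum_eq_zero_iff_of_nonneg fun i _ => huN i).1 hIco0 i
        (Finset.mem_Ico.2 ⟨hi, hiN⟩)
    · exact huZ i (le_trans (le_max_left _ _) (not_lt.1 hiN))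
  -- rewrite both entropy-type sums as sums over range r
  have hyf : ∑ j, y j * Real.log (y j) = ∑ i ∈ Finset.range r, v i * Real.log (v i) := by
    calc ∑ j, y j * Real.log (y j)
        = ∑ i : Fin (Fintype.card κ), y (gv i) * Real.log (y (gv i)) :=
          (Equiv.sum_comp gv (fun j => y j * Real.log (y j))).symm
      _ = ∑ i : Fin (Fintype.card κ), v i * Real.log (v i) :=
          Finset.sum_congr rfl fun i _ => by rw [hvE i]
      _ = ∑ i ∈ Finset.range (Fintype.card κ), v i * Real.log (v i) :=
          Fin.sum_univ_eq_sum_range (fun k => v k * Real.log (v k)) _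
      _ = ∑ i ∈ Finset.range r, v i * Real.log (v i) :=
          sum_range_eq_of_zero _ _ _ (fun i hi => by rw [hvZ i hi]; simp)
            (fun i hi => by rw [hvzero i hi]; simp)
  have hxf : ∑ i, x i * Real.log (x i) = ∑ i ∈ Finset.range r, u i * Real.log (u i) := by
    calc ∑ i, x i * Real.log (x i)
        = ∑ i : Fin (Fintype.card ι), x (gu i) * Real.log (x (gu i)) :=
          (Equiv.sum_comp gu (fun i => x i * Real.log (x i))).symm
      _ = ∑ i : Fin (Fintype.card ι), u i * Real.log (u i) :=
          Finset.sum_congr rfl fun i _ => by rw [huE i]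
      _ = ∑ i ∈ Finset.range (Fintype.card ι), u i * Real.log (u i) :=
          Fin.sum_univ_eq_sum_range (fun k => u k * Real.log (u k)) _
      _ = ∑ i ∈ Finset.range r, u i * Real.log (u i) :=
          sum_range_eq_of_zero _ _ _ (fun i hi => by rw [huZ i hi]; simp)
            (fun i hi => by rw [huzero i hi]; simp)
  rw [hyf, hxf]
  -- main inequality via convexity and Abel summation
  have key : ∀ i ∈ Finset.range r,
      (u i - v i) * (1 + Real.log (v i)) ≤ u i * Real.log (u i) - v i * Real.log (v i) :=
    fun i hi => flog_ineq (huN i) (hvpos i (Finset.mem_range.1 hi))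
  have habel : 0 ≤ ∑ i ∈ Finset.range r, (u i - v i) * Real.log (v i) := by
    refine abel_nonneg (fun i => u i - v i) (fun i => Real.log (v i)) r ?_ ?_ ?_
    · intro k hk
      rw [Finset.sum_sub_distrib]
      linarith [hsorted k (le_trans hk hrκ)]
    · intro i j hij hjr
      exact Real.log_le_log (hvpos j hjr) (hvA hij)
    · rw [Finset.sum_sub_distrib, htot, hur, sub_self]
  have hdsum : ∑ i ∈ Finset.range r, (u i - v i) = 0 := by
    rw [Finset.sum_sub_distrib, htot, hur, sub_self]
  have h2 : ∑ i ∈ Finset.range r, (u i - v i) * (1 + Real.log (v i))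
      ≤ ∑ i ∈ Finset.range r, (u i * Real.log (u i) - v i * Real.log (v i)) :=
    Finset.sum_le_sum key
  have h3 : ∑ i ∈ Finset.range r, (u i - v i) * (1 + Real.log (v i))
      = ∑ i ∈ Finset.range r, (u i - v i)
        + ∑ i ∈ Finset.range r, (u i - v i) * Real.log (v i) := by
    rw [← Finset.sum_add_distrib]
    exact Finset.sum_congr rfl fun i _ => by ring
  rw [Finset.sum_sub_distrib] at h2
  linarith [h2, h3 ▸ h2]

end Helpers

theorem stmt2 (m : ℕ) (p q : Fin m → ℝ) (hp : IsProbDist p) (hq : IsProbDist q)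
    (hneq : ¬∃ σ : Equiv.Perm (Fin m), ∀ i, p i = q (σ i))
    (B : Type*) [Fintype B] (qB : B → ℝ) (hqB : IsProbDist qB)
    (qAB : Fin m × B → ℝ) (hqAB : IsProbDist qAB)
    (hmargA : ∀ i, ∑ b, qAB (i, b) = q i)
    (hmargB : ∀ b, ∑ i, qAB (i, b) = qB b)
    (hmaj : Majorizes (fun x : Fin m × B => p x.1 * qB x.2) qAB)
    (hH : shannonH p = shannonH q) :
    qAB = fun x : Fin m × B => q x.1 * qB x.2 := by
  obtain ⟨hp0, hp1⟩ := hp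
  obtain ⟨hq0, hq1⟩ := hq
  obtain ⟨hqB0, hqB1⟩ := hqB
  obtain ⟨hr0, hr1⟩ := hqAB
  -- Step 1: majorization gives entropy comparison
  have h1 : ∑ ab, qAB ab * Real.log (qAB ab)
      ≤ ∑ ab : Fin m × B, (p ab.1 * qB ab.2) * Real.log (p ab.1 * qB ab.2) :=
    maj_flog _ _ (fun ab => mul_nonneg (hp0 ab.1) (hqB0 ab.2)) hr0 hmaj
  -- Step 2: entropy of product distribution is additive
  have hprod : ∑ ab : Fin m × B, (p ab.1 * qB ab.2) * Real.log (p ab.1 * qB ab.2)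
      = ∑ a, p a * Real.log (p a) + ∑ b, qB b * Real.log (qB b) := by
    have hpt : ∀ (a : Fin m) (b : B), (p a * qB b) * Real.log (p a * qB b)
        = qB b * (p a * Real.log (p a)) + p a * (qB b * Real.log (qB b)) := by
      intro a b
      rcases eq_or_ne (p a) 0 with h | h
      · simp [h]
      rcases eq_or_ne (qB b) 0 with h' | h'
      · simp [h']
      rw [Real.log_mul h h']; ring
    rw [Fintype.sum_prod_type]
    calc ∑ a, ∑ b, (p a * qB b) * Real.log (p a * qB b)
        = ∑ a, ∑ b, (qB b * (p a * Real.log (p a)) + p a * (qB b * Real.log (qB b))) :=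
          Finset.sum_congr rfl fun a _ => Finset.sum_congr rfl fun b _ => hpt a b
      _ = ∑ a, ((∑ b, qB b) * (p a * Real.log (p a)) + p a * ∑ b, qB b * Real.log (qB b)) := by
          refine Finset.sum_congr rfl fun a _ => ?_
          rw [Finset.sum_add_distrib, ← Finset.sum_mul, ← Finset.mul_sum]
      _ = ∑ a, (p a * Real.log (p a) + p a * ∑ b, qB b * Real.log (qB b)) := by
          simp [hqB1]
      _ = ∑ a, p a * Real.log (p a) + (∑ a, p a) * ∑ b, qB b * Real.log (qB b) := by
          rw [Finset.sum_add_distrib, ← Finset.sum_mul]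
      _ = _ := by rw [hp1, one_mul]
  -- Step 3: equal entropies
  have hHpq : ∑ a, p a * Real.log (p a) = ∑ a, q a * Real.log (q a) := by
    simp only [shannonH] at hH
    linarith
  -- positivity of the product marginals wherever qAB is nonzero
  have hpos : ∀ ab : Fin m × B, qAB ab ≠ 0 → 0 < q ab.1 ∧ 0 < qB ab.2 := by
    intro ab hab
    have h0 : 0 < qAB ab := lt_of_le_of_ne (hr0 ab) (Ne.symm hab)
    constructor
    · rw [← hmargA ab.1]
      calc (0:ℝ) < qAB (ab.1, ab.2) := h0
        _ ≤ ∑ b, qAB (ab.1, b) :=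
          Finset.single_le_sum (fun b _ => hr0 (ab.1, b)) (Finset.mem_univ ab.2)
    · rw [← hmargB ab.2]
      calc (0:ℝ) < qAB (ab.1, ab.2) := h0
        _ ≤ ∑ a, qAB (a, ab.2) :=
          Finset.single_le_sum (fun a _ => hr0 (a, ab.2)) (Finset.mem_univ ab.1)
  -- Step 4: marginal identity for cross entropy
  have hcross : ∑ ab : Fin m × B, qAB ab * Real.log (q ab.1 * qB ab.2)
      = ∑ a, q a * Real.log (q a) + ∑ b, qB b * Real.log (qB b) := by
    have hpt : ∀ ab : Fin m × B, qAB ab * Real.log (q ab.1 * qB ab.2)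
        = qAB ab * Real.log (q ab.1) + qAB ab * Real.log (qB ab.2) := by
      intro ab
      rcases eq_or_ne (qAB ab) 0 with h | h
      · simp [h]
      · obtain ⟨h1', h2'⟩ := hpos ab h
        rw [Real.log_mul h1'.ne' h2'.ne', mul_add]
    calc ∑ ab : Fin m × B, qAB ab * Real.log (q ab.1 * qB ab.2)
        = ∑ ab : Fin m × B, (qAB ab * Real.log (q ab.1) + qAB ab * Real.log (qB ab.2)) :=
          Finset.sum_congr rfl fun ab _ => hpt ab
      _ = (∑ ab : Fin m × B, qAB ab * Real.log (q ab.1))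
          + ∑ ab : Fin m × B, qAB ab * Real.log (qB ab.2) := Finset.sum_add_distrib
      _ = ∑ a, q a * Real.log (q a) + ∑ b, qB b * Real.log (qB b) := by
          congr 1
          · rw [Fintype.sum_prod_type]
            refine Finset.sum_congr rfl fun a _ => ?_
            show ∑ y : B, qAB (a, y) * Real.log (q a) = q a * Real.log (q a)
            rw [← Finset.sum_mul, hmargA a]
          · rw [Fintype.sum_prod_type_right]
            refine Finset.sum_congr rfl fun b _ => ?_
            show ∑ a : Fin m, qAB (a, b) * Real.log (qB b) = qB b * Real.log (qB b)
            rw [← Finset.sum_mul, hmargB b]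
  -- Step 5: chain the inequalities
  have hle : ∑ ab, qAB ab * Real.log (qAB ab)
      ≤ ∑ ab : Fin m × B, qAB ab * Real.log (q ab.1 * qB ab.2) := by
    rw [hcross]
    calc ∑ ab, qAB ab * Real.log (qAB ab)
        ≤ ∑ a, p a * Real.log (p a) + ∑ b, qB b * Real.log (qB b) := hprod ▸ h1
      _ = ∑ a, q a * Real.log (q a) + ∑ b, qB b * Real.log (qB b) := by rw [hHpq]
  -- Step 6: Gibbs' inequality equality case
  refine gibbs_eq qAB (fun ab => q ab.1 * qB ab.2) hr0
    (fun ab => mul_nonneg (hq0 ab.1) (hqB0 ab.2))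
    (fun ab hab => mul_pos (hpos ab hab).1 (hpos ab hab).2) ?_ hle
  rw [hr1, Fintype.sum_prod_type]
  calc (1:ℝ) = ∑ a, q a * ∑ b, qB b := by rw [hqB1]; simp [hq1]
    _ = ∑ a, ∑ b, q a * qB b := by
        refine Finset.sum_congr rfl fun a _ => ?_
        rw [Finset.mul_sum]
end

section
/- With q_{AB} the extension defined by rows (δ, δ/n² [n² times], (qᵢ-2δ)/n [n times]) of a full-support distribution q ∈ ℝ^m and 0 < δ < (1/2)minᵢ qᵢ, the mutual information I(A:B) = H(q_A) + H(q_B) - H(q_{AB}) is independent of n and equals ∑ᵢ(qᵢ-2δ)log(qᵢ-2δ) - ∑ᵢ qᵢ log qᵢ - 2mδ log m - (1-2mδ)log(1-2mδ). -/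
open scoped BigOperators Classical

noncomputable def qExt (m n : ℕ) (q : Fin m → ℝ) (δ : ℝ) : Fin m × Fin (n^2 + n + 1) → ℝ :=
  fun x => if (x.2 : ℕ) = 0 then δ
    else if (x.2 : ℕ) ≤ n^2 then δ / (n : ℝ)^2
    else (q x.1 - 2*δ) / (n : ℝ)

noncomputable def qExtB (m n : ℕ) (δ : ℝ) : Fin (n^2 + n + 1) → ℝ :=
  fun j => if (j : ℕ) = 0 then (m : ℝ) * δ
    else if (j : ℕ) ≤ n^2 then (m : ℝ) * δ / (n : ℝ)^2
    else (1 - 2*(m : ℝ)*δ) / (n : ℝ)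

lemma sum_piece (n : ℕ) (a b c : ℝ) :
    ∑ j : Fin (n^2+n+1), (if (j:ℕ) = 0 then a else if (j:ℕ) ≤ n^2 then b else c)
      = a + (n:ℝ)^2 * b + (n:ℝ) * c := by
  rw [Fin.sum_univ_eq_sum_range (fun j => if j = 0 then a else if j ≤ n^2 then b else c),
    Finset.range_eq_Ico,
    ← Finset.sum_Ico_consecutive _ (by omega : 0 ≤ n^2+1) (by omega : n^2+1 ≤ n^2+n+1),
    ← Finset.sum_Ico_consecutive _ (by omega : 0 ≤ 1) (by omega : 1 ≤ n^2+1)]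
  have e1 : ∑ j ∈ Finset.Ico 0 1, (if j = 0 then a else if j ≤ n^2 then b else c) = a := by
    simp
  have e2 : ∑ j ∈ Finset.Ico 1 (n^2+1), (if j = 0 then a else if j ≤ n^2 then b else c)
      = (n:ℝ)^2 * b := by
    have h : ∀ j ∈ Finset.Ico 1 (n^2+1), (if j = 0 then a else if j ≤ n^2 then b else c) = b := by
      intro j hj; simp only [Finset.mem_Ico] at hj
      rw [if_neg (by omega), if_pos (by omega)]
    rw [Finset.sum_congr rfl h, Finset.sum_const, Nat.card_Ico]
    simp only [Nat.add_sub_cancel, nsmul_eq_mul]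
    push_cast; ring
  have e3 : ∑ j ∈ Finset.Ico (n^2+1) (n^2+n+1), (if j = 0 then a else if j ≤ n^2 then b else c)
      = (n:ℝ) * c := by
    have h : ∀ j ∈ Finset.Ico (n^2+1) (n^2+n+1),
        (if j = 0 then a else if j ≤ n^2 then b else c) = c := by
      intro j hj; simp only [Finset.mem_Ico] at hj
      rw [if_neg (by omega), if_neg (by omega)]
    rw [Finset.sum_congr rfl h, Finset.sum_const, Nat.card_Ico,
      show n^2+n+1-(n^2+1) = n by omega, nsmul_eq_mul]
  rw [e1, e2, e3]

theorem stmt4 (m n : ℕ) (hm : 0 < m) (hn : 0 < n) (q : Fin m → ℝ) (hq : IsProbDist q)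
    (hqpos : ∀ i, 0 < q i) (δ : ℝ) (hδ : 0 < δ) (hδ2 : ∀ i, 2*δ < q i) :
    shannonH q + shannonH (qExtB m n δ) - shannonH (qExt m n q δ) =
      ∑ i, (q i - 2*δ) * Real.log (q i - 2*δ) - ∑ i, q i * Real.log (q i)
        - 2*(m : ℝ)*δ*Real.log m - (1 - 2*(m : ℝ)*δ)*Real.log (1 - 2*(m : ℝ)*δ) := by
  have hm' : (0:ℝ) < m := by exact_mod_cast hm
  have hn' : (0:ℝ) < n := by exact_mod_cast hn
  have h1 : (0:ℝ) < 1 - 2*(m:ℝ)*δ := by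
    have : ∑ _i : Fin m, 2*δ < ∑ i, q i :=
      Finset.sum_lt_sum_of_nonempty (by simp [Finset.univ_nonempty_iff, Fin.pos_iff_nonempty.mp hm])
        (fun i _ => hδ2 i)
    simp only [Finset.sum_const, Finset.card_univ, Fintype.card_fin, nsmul_eq_mul, hq.2] at this
    nlinarith
  have hB : shannonH (qExtB m n δ) =
      -(2*(m:ℝ)*δ*Real.log m + 2*(m:ℝ)*δ*Real.log δ - 2*(m:ℝ)*δ*Real.log n
        + (1-2*(m:ℝ)*δ)*Real.log (1-2*(m:ℝ)*δ) - (1-2*(m:ℝ)*δ)*Real.log n) := by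
    have key : ∀ j : Fin (n^2+n+1), qExtB m n δ j * Real.log (qExtB m n δ j) =
        if (j:ℕ) = 0 then ((m:ℝ)*δ) * Real.log ((m:ℝ)*δ)
        else if (j:ℕ) ≤ n^2 then ((m:ℝ)*δ/(n:ℝ)^2) * Real.log ((m:ℝ)*δ/(n:ℝ)^2)
        else ((1-2*(m:ℝ)*δ)/(n:ℝ)) * Real.log ((1-2*(m:ℝ)*δ)/(n:ℝ)) := by
      intro j; unfold qExtB; split_ifs <;> rfl
    rw [shannonH, Finset.sum_congr rfl (fun j _ => key j), sum_piece,
      Real.log_mul hm'.ne' hδ.ne',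
      Real.log_div (mul_pos hm' hδ).ne' (pow_ne_zero _ hn'.ne'),
      Real.log_mul hm'.ne' hδ.ne', Real.log_pow,
      Real.log_div h1.ne' hn'.ne']
    field_simp
    ring
  have hE : shannonH (qExt m n q δ) =
      -(∑ i, (2*δ*Real.log δ + (q i - 2*δ)*Real.log (q i - 2*δ) - Real.log n * q i)) := by
    rw [shannonH, Fintype.sum_prod_type]
    congr 1
    refine Finset.sum_congr rfl (fun i _ => ?_)
    have hqi : (0:ℝ) < q i - 2*δ := by have := hδ2 i; linarith
    have key : ∀ j : Fin (n^2+n+1), qExt m n q δ (i,j) * Real.log (qExt m n q δ (i,j)) =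
        if (j:ℕ) = 0 then δ * Real.log δ
        else if (j:ℕ) ≤ n^2 then (δ/(n:ℝ)^2) * Real.log (δ/(n:ℝ)^2)
        else ((q i - 2*δ)/(n:ℝ)) * Real.log ((q i - 2*δ)/(n:ℝ)) := by
      intro j; unfold qExt; split_ifs <;> rfl
    rw [Finset.sum_congr rfl (fun j _ => key j), sum_piece,
      Real.log_div hδ.ne' (pow_ne_zero _ hn'.ne'), Real.log_pow,
      Real.log_div hqi.ne' hn'.ne']
    field_simp
    ring
  have hEsum : ∑ i, (2*δ*Real.log δ + (q i - 2*δ)*Real.log (q i - 2*δ) - Real.log n * q i)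
      = (m:ℝ)*(2*δ*Real.log δ) + (∑ i, (q i - 2*δ)*Real.log (q i - 2*δ)) - Real.log n := by
    rw [Finset.sum_sub_distrib, Finset.sum_add_distrib, Finset.sum_const, Finset.card_univ,
      Fintype.card_fin, ← Finset.mul_sum]
    simp only [nsmul_eq_mul, hq.2]
    ring
  rw [hB, hE, hEsum, shannonH]
  ring
end

section
/- Let q ∈ ℝ^m be a full-support probability distribution, 0 < δ < 1/m, α < 0 finite, and define f(x) = (mδ^α + mδ^α x² + x∑ᵢ(qᵢ-2δ)^α)/((mδ)^α + (mδ)^α x² + (1-2mδ)^α x). Then f is non-increasing on [1,∞). -/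
open scoped BigOperators Classical

/-- Tangent-line (Bernoulli) inequality for negative exponents. -/
lemma rpow_tangent {t α : ℝ} (ht : 0 < t) (hα : α ≤ 0) :
    1 + α * (t - 1) ≤ t ^ α := by
  have h1 : t ^ α = Real.exp (Real.log t * α) := Real.rpow_def_of_pos ht α
  have h2 : Real.log t * α + 1 ≤ Real.exp (Real.log t * α) := Real.add_one_le_exp _
  have h3 : Real.log t ≤ t - 1 := Real.log_le_sub_one_of_pos ht
  nlinarith [mul_le_mul_of_nonpos_right h3 hα]

theorem stmt8 (m : ℕ) (hm : 0 < m) (q : Fin m → ℝ) (hq : IsProbDist q)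
    (δ : ℝ) (hδ : 0 < δ) (hδm : δ < 1/(m : ℝ)) (hδ2 : ∀ i, 2*δ < q i)
    (α : ℝ) (hα : α < 0) :
    ∀ x y : ℝ, 1 ≤ x → x ≤ y →
      ((m : ℝ) * δ ^ α + (m : ℝ) * δ ^ α * y^2 + y * ∑ i, (q i - 2*δ) ^ α) /
          (((m : ℝ)*δ) ^ α + ((m : ℝ)*δ) ^ α * y^2 + (1 - 2*(m : ℝ)*δ) ^ α * y) ≤
        ((m : ℝ) * δ ^ α + (m : ℝ) * δ ^ α * x^2 + x * ∑ i, (q i - 2*δ) ^ α) /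
          (((m : ℝ)*δ) ^ α + ((m : ℝ)*δ) ^ α * x^2 + (1 - 2*(m : ℝ)*δ) ^ α * x) := by
  intro x y hx hxy
  have hm' : (0:ℝ) < m := Nat.cast_pos.mpr hm
  have hsum : ∑ i, q i = 1 := hq.2
  -- 2mδ < 1
  have h2mδ : 2 * (m:ℝ) * δ < 1 := by
    have := Finset.sum_lt_sum_of_nonempty (s := (Finset.univ : Finset (Fin m)))
      (by have : Nonempty (Fin m) := Fin.pos_iff_nonempty.mp hm; exact Finset.univ_nonempty) (f := fun _ => 2*δ) (g := q)
      (fun i _ => hδ2 i)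
    simp [Finset.sum_const, hsum] at this
    nlinarith
  have hb : (0:ℝ) < 1 - 2*(m:ℝ)*δ := by linarith
  set b : ℝ := (1 - 2*(m:ℝ)*δ) / m with hbdef
  have hbpos : 0 < b := div_pos hb hm'
  set A : ℝ := (m:ℝ) * δ ^ α with hA
  set B : ℝ := ((m:ℝ)*δ) ^ α with hB
  set C : ℝ := (1 - 2*(m:ℝ)*δ) ^ α with hC
  set S : ℝ := ∑ i, (q i - 2*δ) ^ α with hS
  have hApos : 0 < A := mul_pos hm' (Real.rpow_pos_of_pos hδ α)
  have hBpos : 0 < B := Real.rpow_pos_of_pos (mul_pos hm' hδ) α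
  have hCpos : 0 < C := Real.rpow_pos_of_pos hb α
  -- key inequality: S ≥ m * b^α
  have hkey : (m:ℝ) * b ^ α ≤ S := by
    have hterm : ∀ i : Fin m, b ^ α * (1 + α * ((q i - 2*δ)/b - 1)) ≤ (q i - 2*δ) ^ α := by
      intro i
      have hqi : 0 < q i - 2*δ := by have := hδ2 i; linarith
      have ht : 0 < (q i - 2*δ)/b := div_pos hqi hbpos
      have := rpow_tangent ht hα.le
      have hmul : b ^ α * (1 + α * ((q i - 2*δ)/b - 1)) ≤ b ^ α * ((q i - 2*δ)/b) ^ α :=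
        mul_le_mul_of_nonneg_left this (Real.rpow_pos_of_pos hbpos α).le
      have heq : b ^ α * ((q i - 2*δ)/b) ^ α = (q i - 2*δ) ^ α := by
        rw [← Real.mul_rpow hbpos.le (div_nonneg hqi.le hbpos.le)]
        rw [mul_div_cancel₀ _ hbpos.ne']
      linarith [heq ▸ hmul]
    have hsum2 : ∑ i, (b ^ α * (1 + α * ((q i - 2*δ)/b - 1))) ≤ S :=
      Finset.sum_le_sum (fun i _ => hterm i)
    have hsumq : ∑ i, ((q i - 2*δ)/b) = m := by
      rw [← Finset.sum_div]
      have : ∑ i, (q i - 2*δ) = 1 - 2*(m:ℝ)*δ := by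
        rw [Finset.sum_sub_distrib, hsum]
        simp [Finset.sum_const]
        ring
      rw [this, hbdef]
      field_simp
    have hexp : ∑ i, (b ^ α * (1 + α * ((q i - 2*δ)/b - 1))) = (m:ℝ) * b ^ α := by
      have h0 : ∑ i, (1 + α * ((q i - 2*δ)/b - 1))
          = (m:ℝ) + α * (∑ i, ((q i - 2*δ)/b) - m) := by
        rw [Finset.sum_add_distrib, ← Finset.mul_sum, Finset.sum_sub_distrib]
        simp [Finset.card_univ]
      rw [← Finset.mul_sum, h0, hsumq]
      ring
    linarith [hexp ▸ hsum2]
  -- A * C ≤ S * B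
  have hAC : A * C ≤ S * B := by
    have hBb : B = (m:ℝ)^α * δ ^ α := Real.mul_rpow hm'.le hδ.le
    have hbα : b ^ α = C / (m:ℝ)^α := by
      rw [hbdef, Real.div_rpow hb.le hm'.le]
    have hmα : (0:ℝ) < (m:ℝ)^α := Real.rpow_pos_of_pos hm' α
    have h1 : (m:ℝ) * (C / (m:ℝ)^α) ≤ S := hbα ▸ hkey
    have h2 : (m:ℝ) * (C / (m:ℝ)^α) * ((m:ℝ)^α * δ ^ α) ≤ S * ((m:ℝ)^α * δ ^ α) :=
      mul_le_mul_of_nonneg_right h1 (by positivity)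
    calc A * C = (m:ℝ) * (C / (m:ℝ)^α) * ((m:ℝ)^α * δ ^ α) := by
          field_simp [hA]; ring
      _ ≤ S * ((m:ℝ)^α * δ ^ α) := h2
      _ = S * B := by rw [hBb]
  -- positivity of denominators
  have hy : 1 ≤ y := le_trans hx hxy
  have hDx : 0 < B + B * x^2 + C * x := by positivity
  have hDy : 0 < B + B * y^2 + C * y := by positivity
  rw [div_le_div_iff₀ (by ring_nf; ring_nf at hDy; linarith) (by ring_nf; ring_nf at hDx; linarith)]
  nlinarith [mul_nonneg (mul_nonneg (sub_nonneg.2 hxy) (by nlinarith : (0:ℝ) ≤ x*y - 1)) (sub_nonneg.2 hAC), hApos, hBpos, hCpos, mul_pos hDx hDy]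
end

section
/- Let r, r' ∈ ℝ^n be probability distributions with r full-support. Then there exists a stochastic (column-stochastic) linear map Φ: ℝ^n → ℝ^n such that Φ(r) = r' and for every probability distribution p ∈ ℝ^n, the trace distance satisfies ‖Φ(p) - p‖ ≤ max_j (1 - r'_j/r_j). -/
open scoped BigOperators Classical

theorem stmt10 (n : ℕ) (hn : 0 < n) (r r' : Fin n → ℝ) (hr : IsProbDist r) (hr' : IsProbDist r')
    (hrpos : ∀ j, 0 < r j) :
    ∃ Φ : Matrix (Fin n) (Fin n) ℝ,
      (∀ i j, 0 ≤ Φ i j) ∧ (∀ j, ∑ i, Φ i j = 1) ∧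
      Φ.mulVec r = r' ∧
      ∀ p : Fin n → ℝ, IsProbDist p →
        (1/2) * ∑ i, |Φ.mulVec p i - p i| ≤
          Finset.univ.sup' (Finset.univ_nonempty_iff.mpr (Fin.pos_iff_nonempty.mp hn))
            (fun j => 1 - r' j / r j) := by
  have hne : (Finset.univ : Finset (Fin n)).Nonempty :=
    Finset.univ_nonempty_iff.mpr (Fin.pos_iff_nonempty.mp hn)
  set L := Finset.univ.inf' hne (fun j => r' j / r j) with hLdef
  have hL0 : 0 ≤ L :=
    Finset.le_inf' hne _ (fun j _ => div_nonneg (hr'.1 j) (hrpos j).le)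
  have hLr : ∀ i, L * r i ≤ r' i := by
    intro i
    have h := Finset.inf'_le (f := fun j => r' j / r j) (b := i) (Finset.mem_univ i)
    have hri := hrpos i
    have : L * r i ≤ (r' i / r i) * r i := by nlinarith
    calc L * r i ≤ (r' i / r i) * r i := this
      _ = r' i := div_mul_cancel₀ _ (hrpos i).ne'
  have hc : ∀ i, 0 ≤ r' i - L * r i := fun i => sub_nonneg.mpr (hLr i)
  have hcs : ∑ i, (r' i - L * r i) = 1 - L := by
    rw [Finset.sum_sub_distrib, ← Finset.mul_sum, hr.2, hr'.2]; ring
  have hL1 : L ≤ 1 := by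
    have : 0 ≤ ∑ i, (r' i - L * r i) := Finset.sum_nonneg (fun i _ => hc i)
    linarith [hcs ▸ this]
  have hmul : ∀ (v : Fin n → ℝ) (i : Fin n),
      (Matrix.of (fun i j => L * (if i = j then (1:ℝ) else 0) + (r' i - L * r i))).mulVec v i
        = L * v i + (r' i - L * r i) * ∑ j, v j := by
    intro v i
    simp only [Matrix.mulVec, dotProduct, Matrix.of_apply, add_mul, mul_ite, ite_mul,
      mul_one, mul_zero, zero_mul, Finset.sum_add_distrib, Finset.sum_ite_eq, Finset.mem_univ,
      if_true, Finset.mul_sum]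
    try ring_nf
    try rw [Finset.mul_sum]
  refine ⟨Matrix.of (fun i j => L * (if i = j then (1:ℝ) else 0) + (r' i - L * r i)),
    ?_, ?_, ?_, ?_⟩
  · intro i j
    have : (0:ℝ) ≤ if i = j then (1:ℝ) else 0 := by positivity
    exact add_nonneg (mul_nonneg hL0 this) (hc i)
  · intro j
    simp only [Matrix.of_apply, Finset.sum_add_distrib, Finset.mul_sum]
    rw [hcs]
    have : ∑ i, (if i = j then (1:ℝ) else 0) = 1 := by simp
    rw [← Finset.mul_sum, this]; ring
  · funext i
    rw [hmul r i, hr.2]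
    ring
  · intro p hp
    have key : ∀ i, |(Matrix.of (fun i j => L * (if i = j then (1:ℝ) else 0) +
        (r' i - L * r i))).mulVec p i - p i| ≤ (r' i - L * r i) + (1 - L) * p i := by
      intro i
      rw [hmul p i, hp.2, mul_one]
      have h1 := hc i
      have h2 : 0 ≤ (1 - L) * p i := mul_nonneg (by linarith) (hp.1 i)
      rw [abs_le]
      constructor <;> nlinarith
    have hsum : ∑ i, |(Matrix.of (fun i j => L * (if i = j then (1:ℝ) else 0) +
        (r' i - L * r i))).mulVec p i - p i| ≤ 2 * (1 - L) := by
      calc _ ≤ ∑ i, ((r' i - L * r i) + (1 - L) * p i) :=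
            Finset.sum_le_sum (fun i _ => key i)
        _ = 2 * (1 - L) := by
            rw [Finset.sum_add_distrib, hcs, ← Finset.mul_sum, hp.2]; ring
    obtain ⟨j₀, _, hj₀⟩ := Finset.exists_mem_eq_inf' hne (fun j => r' j / r j)
    have hsup : 1 - L ≤ Finset.univ.sup' hne (fun j => 1 - r' j / r j) := by
      rw [hLdef, hj₀]
      exact Finset.le_sup' (fun j => 1 - r' j / r j) (Finset.mem_univ j₀)
    linarith
end

section
/- Let γ = (d₁/D, ..., d_n/D) be a probability distribution with dᵢ ∈ ℕ positive and D = ∑ᵢ dᵢ, and let Γ be the embedding map Γ(p) = (p₁/d₁ repeated d₁ times, ..., p_n/d_n repeated d_n times) ∈ ℝ^D. Then for every probability distribution p ∈ ℝ^n and every α > 0, α ≠ 1, the Rényi divergence satisfies S_α(p‖γ) = log D - H_α(Γ(p)). -/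
open scoped BigOperators Classical

theorem stmt11 (n : ℕ) (d : Fin n → ℕ) (hd : ∀ i, 0 < d i)
    (p : Fin n → ℝ) (hp : IsProbDist p) (α : ℝ) (hα0 : 0 < α) (hα1 : α ≠ 1) :
    (1/(α - 1)) * Real.log (∑ i, p i ^ α * ((d i : ℝ) / (∑ k, (d k : ℝ))) ^ (1 - α)) =
      Real.log (∑ k, (d k : ℝ)) -
        (1/(1 - α)) * Real.log (∑ x : Σ i, Fin (d i), (p x.1 / (d x.1 : ℝ)) ^ α) := by
  have hdpos : ∀ i, (0:ℝ) < d i := fun i => by exact_mod_cast hd i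
  obtain ⟨i0, -, hi0⟩ := Finset.exists_ne_zero_of_sum_ne_zero
    (by rw [hp.2]; norm_num : ∑ i, p i ≠ 0)
  have hDpos : 0 < ∑ k, (d k : ℝ) :=
    Finset.sum_pos (fun k _ => hdpos k) ⟨i0, Finset.mem_univ _⟩
  set D : ℝ := ∑ k, (d k : ℝ) with hDdef
  have hS : 0 < ∑ i, p i ^ α * (d i:ℝ)^(1-α) := by
    refine Finset.sum_pos' (fun i _ => mul_nonneg (Real.rpow_nonneg (hp.1 i) α)
      (Real.rpow_nonneg (hdpos i).le _)) ⟨i0, Finset.mem_univ _, ?_⟩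
    exact mul_pos (Real.rpow_pos_of_pos (lt_of_le_of_ne (hp.1 i0) (Ne.symm hi0)) α)
      (Real.rpow_pos_of_pos (hdpos i0) _)
  have h1 : ∑ i, p i ^ α * ((d i:ℝ)/D)^(1-α)
      = (∑ i, p i ^ α * (d i:ℝ)^(1-α)) * D ^ (α-1) := by
    rw [Finset.sum_mul]
    refine Finset.sum_congr rfl fun i _ => ?_
    rw [Real.div_rpow (hdpos i).le hDpos.le, div_eq_mul_inv, ← Real.rpow_neg hDpos.le, neg_sub]
    ring
  have h2 : ∑ x : Σ i, Fin (d i), (p x.1 / (d x.1:ℝ)) ^ α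
      = ∑ i, p i ^ α * (d i:ℝ)^(1-α) := by
    rw [← Finset.univ_sigma_univ, Finset.sum_sigma]
    refine Finset.sum_congr rfl fun i _ => ?_
    simp only [Finset.sum_const, Finset.card_univ, Fintype.card_fin, nsmul_eq_mul]
    rw [Real.div_rpow (hp.1 i) (hdpos i).le, Real.rpow_sub (hdpos i), Real.rpow_one]
    field_simp
  rw [h1, h2, Real.log_mul hS.ne' (Real.rpow_pos_of_pos hDpos _).ne', Real.log_rpow hDpos]
  have hαne : α - 1 ≠ 0 := sub_ne_zero.mpr hα1
  have hαne' : 1 - α ≠ 0 := sub_ne_zero.mpr (Ne.symm hα1)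
  field_simp
  ring
end

section
/- Let p, q ∈ ℝ^m be probability distributions, q full-support, with H(p) < H(q), and assume p is not the uniform distribution. Define the Burg entropy difference Δ_n^{Burg} = H_Burg(q_{AB}) - H_Burg(p) - H_Burg(q_B) for the extension q_{AB} with rows (δ, δ/n² [n²×], (qᵢ-2δ)/n [n×]). Then Δ_n^{Burg} = -H_Burg(p) + (1/(n²+n+1))·[(n/m)∑ᵢ log(qᵢ-2δ) - (n²+1)log m - n·log(1-2mδ)], and consequently lim_{n→∞} Δ_n^{Burg} = -log m - H_Burg(p), which is strictly positive when p is full-support and not uniform. -/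
open scoped BigOperators Classical

noncomputable def burgH {ι : Type*} [Fintype ι] (x : ι → ℝ) : ℝ :=
  (1 / (Fintype.card ι : ℝ)) * ∑ i, Real.log (x i)

lemma aux_sum19 (n : ℕ) (a b c : ℝ) :
    ∑ j ∈ Finset.range (n^2+n+1), (if j = 0 then a else if j ≤ n^2 then b else c)
      = a + (n:ℝ)^2 * b + (n:ℝ) * c := by
  rw [Finset.range_eq_Ico,
    ← Finset.sum_Ico_consecutive _ (Nat.zero_le 1) (by omega : 1 ≤ n^2+n+1),
    ← Finset.sum_Ico_consecutive _ (by omega : 1 ≤ n^2+1) (by omega : n^2+1 ≤ n^2+n+1)]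
  have h1 : ∑ j ∈ Finset.Ico 0 1, (if j = 0 then a else if j ≤ n^2 then b else c) = a := by
    simp
  have h2 : ∑ j ∈ Finset.Ico 1 (n^2+1), (if j = 0 then a else if j ≤ n^2 then b else c)
      = (n:ℝ)^2 * b := by
    have e : ∀ j ∈ Finset.Ico 1 (n^2+1),
        (if j = 0 then a else if j ≤ n^2 then b else c) = b := fun j hj => by
      simp only [Finset.mem_Ico] at hj; rw [if_neg (by omega), if_pos (by omega)]
    rw [Finset.sum_congr rfl e, Finset.sum_const, Nat.card_Ico, nsmul_eq_mul]
    push_cast; ring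
  have h3 : ∑ j ∈ Finset.Ico (n^2+1) (n^2+n+1), (if j = 0 then a else if j ≤ n^2 then b else c)
      = (n:ℝ) * c := by
    have e : ∀ j ∈ Finset.Ico (n^2+1) (n^2+n+1),
        (if j = 0 then a else if j ≤ n^2 then b else c) = c := fun j hj => by
      simp only [Finset.mem_Ico] at hj; rw [if_neg (by omega), if_neg (by omega)]
    rw [Finset.sum_congr rfl e, Finset.sum_const, Nat.card_Ico, nsmul_eq_mul]
    have : n^2+n+1 - (n^2+1) = n := by omega
    rw [this]
  rw [h1, h2, h3, add_assoc]

lemma burg_lt19 (m : ℕ) (hm : 0 < m) (p : Fin m → ℝ) (hp : IsProbDist p)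
    (hppos : ∀ i, 0 < p i) (hpnu : ¬∀ i, p i = 1/(m : ℝ)) :
    burgH p < -Real.log m := by
  have hmR : (0:ℝ) < m := by exact_mod_cast hm
  have hne : ∃ j, ∃ k, p j ≠ p k := by
    by_contra h; push_neg at h
    apply hpnu; intro i
    have : ∑ k : Fin m, p i = 1 := by
      rw [Finset.sum_congr rfl fun k _ => (h i k)]; exact hp.2
    rw [Finset.sum_const, Finset.card_univ, Fintype.card_fin, nsmul_eq_mul] at this
    field_simp
    linarith
  obtain ⟨j, k, hjk⟩ := hne
  have key := strictConcaveOn_log_Ioi.lt_map_sum (t := (Finset.univ : Finset (Fin m)))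
    (w := fun _ : Fin m => 1/(m:ℝ)) (p := p)
    (fun i _ => by positivity)
    (by rw [Finset.sum_const, Finset.card_univ, Fintype.card_fin, nsmul_eq_mul]; field_simp)
    (fun i _ => hppos i)
    ⟨j, Finset.mem_univ j, k, Finset.mem_univ k, hjk⟩
  have hr : ∑ i, (1/(m:ℝ)) • p i = 1/(m:ℝ) := by
    simp only [smul_eq_mul, ← Finset.mul_sum, hp.2, mul_one]
  rw [hr] at key
  have hb : burgH p = ∑ i, (1/(m:ℝ)) • Real.log (p i) := by
    simp only [burgH, Fintype.card_fin, smul_eq_mul, Finset.mul_sum]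
  rw [hb]
  calc ∑ i, (1/(m:ℝ)) • Real.log (p i) < Real.log (1/(m:ℝ)) := key
    _ = -Real.log m := by rw [one_div, Real.log_inv]

theorem stmt19 (m : ℕ) (hm : 0 < m) (p q : Fin m → ℝ) (hp : IsProbDist p)
    (hppos : ∀ i, 0 < p i) (hpnu : ¬∀ i, p i = 1/(m : ℝ))
    (hq : IsProbDist q) (hqpos : ∀ i, 0 < q i)
    (hH : shannonH p < shannonH q) (δ : ℝ) (hδ : 0 < δ) (hδ2 : ∀ i, 2*δ < q i) :
    (∀ n : ℕ, 0 < n →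
      burgH (qExt m n q δ) - burgH p - burgH (qExtB m n δ) =
        -burgH p + (1/((n : ℝ)^2 + (n : ℝ) + 1)) *
          (((n : ℝ)/(m : ℝ)) * ∑ i, Real.log (q i - 2*δ)
            - ((n : ℝ)^2 + 1) * Real.log m - (n : ℝ) * Real.log (1 - 2*(m : ℝ)*δ))) ∧
    Filter.Tendsto (fun n : ℕ =>
        -burgH p + (1/((n : ℝ)^2 + (n : ℝ) + 1)) *
          (((n : ℝ)/(m : ℝ)) * ∑ i, Real.log (q i - 2*δ)
            - ((n : ℝ)^2 + 1) * Real.log m - (n : ℝ) * Real.log (1 - 2*(m : ℝ)*δ)))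
      Filter.atTop (nhds (-Real.log m - burgH p)) ∧
    0 < -Real.log m - burgH p := by
  have hmR : (0:ℝ) < m := by exact_mod_cast hm
  have h1m : (0:ℝ) < 1 - 2*(m:ℝ)*δ := by
    have : ∑ i : Fin m, 2*δ < ∑ i, q i := Finset.sum_lt_sum_of_nonempty
      ⟨⟨0, hm⟩, Finset.mem_univ _⟩ (fun i _ => hδ2 i)
    rw [hq.2, Finset.sum_const, Finset.card_univ, Fintype.card_fin, nsmul_eq_mul] at this
    linarith
  refine ⟨?_, ?_, ?_⟩
  · -- part 1
    intro n hn
    have hnR : (0:ℝ) < n := by exact_mod_cast hn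
    have hD : (0:ℝ) < (n:ℝ)^2+(n:ℝ)+1 := by positivity
    have hlogd : Real.log (δ / (n:ℝ)^2) = Real.log δ - 2 * Real.log n := by
      rw [Real.log_div hδ.ne' (by positivity), Real.log_pow]; push_cast; ring
    -- sum for qExt
    have hA : ∑ x : Fin m × Fin (n^2+n+1), Real.log (qExt m n q δ x)
        = (m:ℝ) * (Real.log δ + (n:ℝ)^2*(Real.log δ - 2*Real.log n) - (n:ℝ)*Real.log n)
          + (n:ℝ) * ∑ i, Real.log (q i - 2*δ) := by
      rw [Fintype.sum_prod_type]
      have inner : ∀ i, ∑ j : Fin (n^2+n+1), Real.log (qExt m n q δ (i, j))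
          = (Real.log δ + (n:ℝ)^2*(Real.log δ - 2*Real.log n) - (n:ℝ)*Real.log n)
            + (n:ℝ) * Real.log (q i - 2*δ) := by
        intro i
        have e : ∀ j : Fin (n^2+n+1), Real.log (qExt m n q δ (i, j)) =
            (fun jn : ℕ => if jn = 0 then Real.log δ else if jn ≤ n^2
              then Real.log (δ/(n:ℝ)^2) else Real.log ((q i - 2*δ)/(n:ℝ))) (j : ℕ) := by
          intro j; simp only [qExt]; split_ifs <;> rfl
        rw [Finset.sum_congr rfl fun j _ => e j,
          Fin.sum_univ_eq_sum_range (fun jn : ℕ => if jn = 0 then Real.log δ else if jn ≤ n^2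
            then Real.log (δ/(n:ℝ)^2) else Real.log ((q i - 2*δ)/(n:ℝ))) (n^2+n+1),
          aux_sum19, hlogd,
          Real.log_div (by have := hδ2 i; linarith : q i - 2*δ ≠ 0) hnR.ne']
        ring
      rw [Finset.sum_congr rfl fun i _ => inner i, Finset.sum_add_distrib,
        Finset.sum_const, Finset.card_univ, Fintype.card_fin, nsmul_eq_mul,
        ← Finset.mul_sum]
    -- sum for qExtB
    have hB : ∑ j : Fin (n^2+n+1), Real.log (qExtB m n δ j)
        = (Real.log m + Real.log δ) + (n:ℝ)^2*(Real.log m + Real.log δ - 2*Real.log n)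
          + (n:ℝ)*(Real.log (1 - 2*(m:ℝ)*δ) - Real.log n) := by
      have e : ∀ j : Fin (n^2+n+1), Real.log (qExtB m n δ j) =
          (fun jn : ℕ => if jn = 0 then Real.log ((m:ℝ)*δ) else if jn ≤ n^2
            then Real.log ((m:ℝ)*δ/(n:ℝ)^2) else Real.log ((1 - 2*(m:ℝ)*δ)/(n:ℝ))) (j : ℕ) := by
        intro j; simp only [qExtB]; split_ifs <;> rfl
      rw [Finset.sum_congr rfl fun j _ => e j,
        Fin.sum_univ_eq_sum_range (fun jn : ℕ => if jn = 0 then Real.log ((m:ℝ)*δ) else if jn ≤ n^2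
          then Real.log ((m:ℝ)*δ/(n:ℝ)^2) else Real.log ((1 - 2*(m:ℝ)*δ)/(n:ℝ))) (n^2+n+1),
        aux_sum19,
        Real.log_div (by positivity : (m:ℝ)*δ ≠ 0) (by positivity : ((n:ℝ)^2) ≠ 0),
        Real.log_mul hmR.ne' hδ.ne', Real.log_pow,
        Real.log_div h1m.ne' hnR.ne']
      push_cast; ring
    have hcardA : (Fintype.card (Fin m × Fin (n^2+n+1)) : ℝ) = (m:ℝ) * ((n:ℝ)^2+(n:ℝ)+1) := by
      simp
    have hcardB : (Fintype.card (Fin (n^2+n+1)) : ℝ) = (n:ℝ)^2+(n:ℝ)+1 := by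
      simp
    rw [show burgH (qExt m n q δ) = (1 / (Fintype.card (Fin m × Fin (n^2+n+1)) : ℝ)) *
        ∑ x, Real.log (qExt m n q δ x) from rfl,
      show burgH (qExtB m n δ) = (1 / (Fintype.card (Fin (n^2+n+1)) : ℝ)) *
        ∑ j, Real.log (qExtB m n δ j) from rfl,
      hA, hB, hcardA, hcardB]
    field_simp
    ring
  · -- part 2
    set S := ∑ i, Real.log (q i - 2*δ) with hS
    set L := Real.log m with hL
    set B := Real.log (1 - 2*(m:ℝ)*δ) with hBdef
    set C := S/(m:ℝ) - B + L with hC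
    have heq : ∀ n : ℕ,
        -burgH p + (1/((n : ℝ)^2 + (n : ℝ) + 1)) *
          (((n : ℝ)/(m : ℝ)) * S - ((n : ℝ)^2 + 1) * L - (n : ℝ) * B)
        = (-L - burgH p) + C * ((n:ℝ)/((n:ℝ)^2+(n:ℝ)+1)) := by
      intro n
      have hD : ((n:ℝ)^2+(n:ℝ)+1) ≠ 0 := by positivity
      field_simp [hC]
      rw [hC, div_eq_mul_inv]
      have hmm : (m:ℝ) * (m:ℝ)⁻¹ = 1 := mul_inv_cancel₀ hmR.ne'
      linear_combination (-(n:ℝ) * S) * hmm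
    simp only [heq]
    have h0 : Filter.Tendsto (fun n : ℕ => (n:ℝ)/((n:ℝ)^2+(n:ℝ)+1)) Filter.atTop (nhds 0) := by
      apply tendsto_of_tendsto_of_tendsto_of_le_of_le' tendsto_const_nhds
        tendsto_one_div_atTop_nhds_zero_nat
      · exact Filter.Eventually.of_forall fun n => by positivity
      · filter_upwards [Filter.eventually_ge_atTop 1] with n hn
        have hnR : (0:ℝ) < n := by exact_mod_cast hn
        rw [div_le_div_iff₀ (by positivity) hnR]
        nlinarith
    have := (h0.const_mul C).const_add (-L - burgH p)
    simpa using this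
  · -- part 3
    have := burg_lt19 m hm p hp hppos hpnu
    linarith
end
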